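/- arXiv:2203.03764 — 3 statements merged into one kernel-verified Lean document; each statement's English description precedes it below -/
import Mathlib

section
/- Fix n, d : ℕ and a compression function h : Fin (2^n) × Fin (2^n) → Fin (2^n). If two leaf vectors ℓ₁ ℓ₂ : Fin (2^d) → Fin (2^n) differ in exactly one coordinate i (i.e., ℓ₁ i ≠ ℓ₂ i and ℓ₁ j = ℓ₂ j for all j ≠ i) and their depth-d Merkle roots are equal, then there exist a level and values x ≠ y and s in Fin (2^n) such that h (x, s) = h (y, s) or h (s, x) = h (s, y); that is, h admits a collision on two distinct inputs that share their sibling component and lie on the root-to-leaf path of index i. -/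
/-- The left half of a leaf vector of a depth-`(d+1)` Merkle tree: the restriction to the
indices whose most significant bit is `0`, i.e. the indices `< 2^d`. -/
def leftHalf {n d : ℕ} (ℓ : Fin (2 ^ (d + 1)) → Fin (2 ^ n)) (j : Fin (2 ^ d)) :
    Fin (2 ^ n) :=
  ℓ ⟨j.val, by have hj := j.isLt; have h : (2 : ℕ) ^ (d + 1) = 2 ^ d * 2 := pow_succ 2 d; omega⟩

/-- The right half of a leaf vector of a depth-`(d+1)` Merkle tree: the restriction to the
indices whose most significant bit is `1`, i.e. the indices `≥ 2^d`. -/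
def rightHalf {n d : ℕ} (ℓ : Fin (2 ^ (d + 1)) → Fin (2 ^ n)) (j : Fin (2 ^ d)) :
    Fin (2 ^ n) :=
  ℓ ⟨j.val + 2 ^ d, by
    have hj := j.isLt; have h : (2 : ℕ) ^ (d + 1) = 2 ^ d * 2 := pow_succ 2 d; omega⟩

/-- The depth-`d` Merkle root of a leaf vector `ℓ : Fin (2^d) → Fin (2^n)`, computed with
the compression function `h`: for `d = 0` the root is the unique leaf; for depth `d+1` it
is `h` applied to the pair of the roots of the left and right halves. -/
def merkleRoot {n : ℕ} (h : Fin (2 ^ n) × Fin (2 ^ n) → Fin (2 ^ n)) :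
    (d : ℕ) → (Fin (2 ^ d) → Fin (2 ^ n)) → Fin (2 ^ n)
  | 0, ℓ => ℓ ⟨0, by norm_num⟩
  | d + 1, ℓ => h (merkleRoot h d (leftHalf ℓ), merkleRoot h d (rightHalf ℓ))

/-! Walking down the path from the root to the changed leaf, the node values of the two trees
agree at the root and differ at the leaf. At the last level where they agree, the children on the
path differ while their siblings, whose subtrees have unchanged leaves, are equal: a collision of
`h`. -/

section HalfIndex

variable {d : ℕ}

def leftIndex (j : Fin (2 ^ d)) : Fin (2 ^ (d + 1)) :=
  ⟨j, by have := j.isLt; rw [pow_succ]; omega⟩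

def rightIndex (j : Fin (2 ^ d)) : Fin (2 ^ (d + 1)) :=
  ⟨j + 2 ^ d, by have := j.isLt; rw [pow_succ]; omega⟩

theorem leftHalf_eq_comp {n : ℕ} (ℓ : Fin (2 ^ (d + 1)) → Fin (2 ^ n)) :
    leftHalf ℓ = ℓ ∘ leftIndex :=
  rfl

theorem rightHalf_eq_comp {n : ℕ} (ℓ : Fin (2 ^ (d + 1)) → Fin (2 ^ n)) :
    rightHalf ℓ = ℓ ∘ rightIndex :=
  rfl

theorem leftIndex_injective : Function.Injective (leftIndex (d := d)) :=
  fun _ _ hjk => Fin.ext (by simpa [leftIndex] using hjk)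

theorem rightIndex_injective : Function.Injective (rightIndex (d := d)) :=
  fun _ _ hjk => Fin.ext (by simpa [rightIndex] using hjk)

theorem leftIndex_ne_rightIndex (j k : Fin (2 ^ d)) : leftIndex j ≠ rightIndex k := by
  intro hjk
  have := congrArg Fin.val hjk
  simp only [leftIndex, rightIndex] at this
  omega

theorem exists_eq_leftIndex_or_rightIndex (i : Fin (2 ^ (d + 1))) :
    (∃ j, i = leftIndex j) ∨ ∃ j, i = rightIndex j := by
  by_cases hi : i.val < 2 ^ d
  · exact Or.inl ⟨⟨i, hi⟩, rfl⟩
  · have : i.val < 2 ^ d * 2 := pow_succ 2 d ▸ i.isLt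
    exact Or.inr ⟨⟨i - 2 ^ d, by omega⟩, Fin.ext (show (i : ℕ) = i - 2 ^ d + 2 ^ d by omega)⟩

end HalfIndex

/-- If two leaf vectors differ in exactly one coordinate `i` and their
depth-`d` Merkle roots are equal, then the compression function `h` admits a collision on
two distinct inputs that share their sibling component: there are values `x ≠ y` and `s`
with `h (x, s) = h (y, s)` or `h (s, x) = h (s, y)`. -/
theorem merkle_single_leaf_change_collision {n d : ℕ}
    (h : Fin (2 ^ n) × Fin (2 ^ n) → Fin (2 ^ n))
    (ℓ₁ ℓ₂ : Fin (2 ^ d) → Fin (2 ^ n)) (i : Fin (2 ^ d))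
    (hne : ℓ₁ i ≠ ℓ₂ i) (hagree : ∀ j, j ≠ i → ℓ₁ j = ℓ₂ j)
    (hroot : merkleRoot h d ℓ₁ = merkleRoot h d ℓ₂) :
    ∃ x y s : Fin (2 ^ n), x ≠ y ∧ (h (x, s) = h (y, s) ∨ h (s, x) = h (s, y)) := by
  induction d with
  | zero =>
    obtain rfl : i = ⟨0, by norm_num⟩ := Subsingleton.elim (α := Fin 1) _ _
    exact absurd hroot hne
  | succ d ih =>
    simp only [merkleRoot, leftHalf_eq_comp, rightHalf_eq_comp] at hroot
    obtain ⟨j, rfl⟩ | ⟨j, rfl⟩ := exists_eq_leftIndex_or_rightIndex i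
    · have hright : ℓ₁ ∘ rightIndex = ℓ₂ ∘ rightIndex :=
        funext fun k => hagree _ (leftIndex_ne_rightIndex j k).symm
      by_cases hleft : merkleRoot h d (ℓ₁ ∘ leftIndex) = merkleRoot h d (ℓ₂ ∘ leftIndex)
      · exact ih _ _ j hne (fun k hk => hagree _ (leftIndex_injective.ne hk)) hleft
      · exact ⟨_, _, _, hleft, Or.inl (by rwa [hright] at hroot)⟩
    · have hleft : ℓ₁ ∘ leftIndex = ℓ₂ ∘ leftIndex :=
        funext fun k => hagree _ (leftIndex_ne_rightIndex k j)
      by_cases hright : merkleRoot h d (ℓ₁ ∘ rightIndex) = merkleRoot h d (ℓ₂ ∘ rightIndex)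
      · exact ih _ _ j hne (fun k hk => hagree _ (rightIndex_injective.ne hk)) hright
      · exact ⟨_, _, _, hright, Or.inr (by rwa [hleft] at hroot)⟩
end

section
/- Fix n, d : ℕ and a compression function h : Fin (2^n) × Fin (2^n) → Fin (2^n). For any two distinct leaf vectors ℓ₁ ≠ ℓ₂ : Fin (2^d) → Fin (2^n), if their depth-d Merkle roots are equal, then there exist inputs p ≠ q in Fin (2^n) × Fin (2^n) with h p = h q; that is, equal roots on distinct leaf sets force a collision of the compression function. -/
theorem eq_of_leftHalf_eq_of_rightHalf_eq {n d : ℕ} {ℓ₁ ℓ₂ : Fin (2 ^ (d + 1)) → Fin (2 ^ n)}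
    (hL : leftHalf ℓ₁ = leftHalf ℓ₂) (hR : rightHalf ℓ₁ = rightHalf ℓ₂) : ℓ₁ = ℓ₂ := by
  have hsize : (2 : ℕ) ^ (d + 1) = 2 ^ d + 2 ^ d := by rw [pow_succ, mul_two]
  funext i
  by_cases hi : i.val < 2 ^ d
  · exact congrFun hL ⟨i.val, hi⟩
  · have hidx : i = ⟨(i.val - 2 ^ d) + 2 ^ d, by omega⟩ := by ext; simp only; omega
    rw [hidx]
    exact congrFun hR ⟨i.val - 2 ^ d, by omega⟩

theorem merkleRoot_injective {n : ℕ} {h : Fin (2 ^ n) × Fin (2 ^ n) → Fin (2 ^ n)}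
    (hh : Function.Injective h) (d : ℕ) : Function.Injective (merkleRoot h d) := by
  induction d with
  | zero =>
    intro ℓ₁ ℓ₂ hroot
    funext i
    rwa [Fin.fin_one_eq_zero i]
  | succ d ih =>
    intro ℓ₁ ℓ₂ hroot
    obtain ⟨hL, hR⟩ := Prod.mk.inj (hh hroot)
    exact eq_of_leftHalf_eq_of_rightHalf_eq (ih hL) (ih hR)

/-- For any two distinct leaf vectors, if their depth-`d` Merkle roots are
equal, then the compression function `h` admits a collision: there are distinct inputs
`p ≠ q` in `Fin (2^n) × Fin (2^n)` with `h p = h q`.  (Equal roots on distinct leaf sets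
force a collision of the compression function.) -/
theorem merkle_root_collision_of_distinct_leaves {n d : ℕ}
    (h : Fin (2 ^ n) × Fin (2 ^ n) → Fin (2 ^ n))
    (ℓ₁ ℓ₂ : Fin (2 ^ d) → Fin (2 ^ n)) (hne : ℓ₁ ≠ ℓ₂)
    (hroot : merkleRoot h d ℓ₁ = merkleRoot h d ℓ₂) :
    ∃ p q : Fin (2 ^ n) × Fin (2 ^ n), p ≠ q ∧ h p = h q := by
  have hnot_inj : ¬Function.Injective h := fun hh => hne (merkleRoot_injective hh d hroot)
  obtain ⟨p, q, hpq, hp_ne_q⟩ := Function.not_injective_iff.mp hnot_inj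
  exact ⟨p, q, hp_ne_q, hpq⟩
end

section
/- Fix n, d : ℕ, a compression function h : Fin (2^n) × Fin (2^n) → Fin (2^n), a leaf vector ℓ : Fin (2^d) → Fin (2^n), and a leaf index i : Fin (2^d). Define the authentication path of i as the sequence s : Fin d → Fin (2^n) where s k is the Merkle root of the depth-k sibling subtree of i at level k (the subtree whose leaves agree with i in all binary digits above position k and differ from i at digit k). Then the iterative recomputation v₀ = ℓ i, and v_{k+1} = h (v_k, s k) if the k-th binary digit of i is 0 and v_{k+1} = h (s k, v_k) if it is 1, satisfies v_d = the depth-d Merkle root of ℓ. That is, folding the leaf value with the sibling hashes along the path, with the concatenation order at each level determined by the corresponding digit of i, reconstructs the tree root. -/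
/-- The `j`-th leaf of the depth-`k` *sibling subtree* of the leaf index `i` at level `k`:
the full tree index that agrees with `i` in all binary digits strictly above position `k`,
differs from `i` at digit `k`, and whose `k` low digits are given by `j`. -/
def sibIndex {d : ℕ} (i : Fin (2 ^ d)) (k : ℕ) (hk : k < d) (j : Fin (2 ^ k)) :
    Fin (2 ^ d) :=
  ⟨i.val / 2 ^ (k + 1) * 2 ^ (k + 1) + (if Nat.testBit i.val k then 0 else 2 ^ k) + j.val, by
    have h1 : i.val / 2 ^ (k + 1) < 2 ^ (d - (k + 1)) := by
      apply Nat.div_lt_of_lt_mul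
      have hpow : (2 : ℕ) ^ (k + 1) * 2 ^ (d - (k + 1)) = 2 ^ d := by
        rw [← pow_add]; congr 1; omega
      rw [hpow]; exact i.isLt
    have h2 : (if Nat.testBit i.val k then 0 else 2 ^ k) + j.val < 2 ^ (k + 1) := by
      have hj := j.isLt
      have hp : (2 : ℕ) ^ (k + 1) = 2 ^ k * 2 := pow_succ 2 k
      split <;> omega
    calc i.val / 2 ^ (k + 1) * 2 ^ (k + 1) + (if Nat.testBit i.val k then 0 else 2 ^ k)
            + j.val
        < (i.val / 2 ^ (k + 1) + 1) * 2 ^ (k + 1) := by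
          have := h2; ring_nf; omega
      _ ≤ 2 ^ (d - (k + 1)) * 2 ^ (k + 1) := Nat.mul_le_mul_right _ h1
      _ = 2 ^ d := by rw [← pow_add]; congr 1; omega⟩

/-- Iterative recomputation of a Merkle root from a leaf value `leafVal`, the binary digits
of the leaf index `iv`, and a sequence `s` of sibling hashes: `v 0 = leafVal` and
`v (k+1) = h (v k, s k)` if the `k`-th binary digit of `iv` is `0`, and
`v (k+1) = h (s k, v k)` if it is `1`.  `recompute h iv leafVal m s` is `v m`. -/
def recompute {n : ℕ} (h : Fin (2 ^ n) × Fin (2 ^ n) → Fin (2 ^ n)) (iv : ℕ)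
    (leafVal : Fin (2 ^ n)) : (m : ℕ) → (Fin m → Fin (2 ^ n)) → Fin (2 ^ n)
  | 0, _ => leafVal
  | m + 1, s =>
    let v := recompute h iv leafVal m fun k => s k.castSucc
    if Nat.testBit iv m then h (s (Fin.last m), v) else h (v, s (Fin.last m))

theorem Nat.lt_two_pow_of_testBit_eq_false {x d : ℕ} (hx : x < 2 ^ (d + 1))
    (hb : x.testBit d = false) : x < 2 ^ d := by
  by_contra! hge
  obtain ⟨r, rfl⟩ := Nat.exists_eq_add_of_le hge
  have hr : r < 2 ^ d := by rw [pow_succ] at hx; omega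
  rw [Nat.testBit_two_pow_add_eq, Nat.testBit_lt_two_pow hr] at hb
  exact Bool.noConfusion hb

theorem Fin.exists_val_eq_two_pow_add_of_testBit {d : ℕ} (i : Fin (2 ^ (d + 1)))
    (hb : i.val.testBit d = true) : ∃ i' : Fin (2 ^ d), i.val = 2 ^ d + i'.val := by
  have hge := Nat.ge_two_pow_of_testBit hb
  have hlt : i.val < 2 ^ d * 2 := pow_succ 2 d ▸ i.isLt
  exact ⟨⟨i.val - 2 ^ d, by omega⟩, by simp only; omega⟩

theorem recompute_congr {n : ℕ} (h : Fin (2 ^ n) × Fin (2 ^ n) → Fin (2 ^ n)) {iv iv' : ℕ}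
    (leafVal : Fin (2 ^ n)) {m : ℕ} (s : Fin m → Fin (2 ^ n))
    (hbits : ∀ k < m, iv.testBit k = iv'.testBit k) :
    recompute h iv leafVal m s = recompute h iv' leafVal m s := by
  induction m with
  | zero => rfl
  | succ m ih =>
    have hlow := ih (fun k => s k.castSucc) fun k hk => hbits k (hk.trans (lt_add_one m))
    simp only [recompute, hbits m (lt_add_one m), hlow]

theorem sibIndex_val_of_val_eq_two_pow_add {d m k : ℕ} {i : Fin (2 ^ d)} {i' : Fin (2 ^ m)}
    (hk : k < d) (hk' : k < m) (hi : i.val = 2 ^ m + i'.val) (j : Fin (2 ^ k)) :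
    (sibIndex i k hk j).val = 2 ^ m + (sibIndex i' k hk' j).val := by
  have hblock (x : ℕ) : (2 ^ m + x) / 2 ^ (k + 1) * 2 ^ (k + 1)
      = 2 ^ m + x / 2 ^ (k + 1) * 2 ^ (k + 1) := by
    have hm : 2 ^ m = 2 ^ (k + 1) * 2 ^ (m - (k + 1)) := by rw [← pow_add]; congr 1; omega
    rw [hm, Nat.mul_add_div (by positivity)]
    ring
  simp only [sibIndex, hi, hblock, Nat.testBit_two_pow_add_gt hk']
  ring

theorem apply_sibIndex_last {n d : ℕ} (ℓ : Fin (2 ^ (d + 1)) → Fin (2 ^ n))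
    (i : Fin (2 ^ (d + 1))) :
    (fun j => ℓ (sibIndex i d (lt_add_one d) j))
      = if i.val.testBit d then leftHalf ℓ else rightHalf ℓ := by
  funext j
  have htop : i.val / 2 ^ (d + 1) = 0 := Nat.div_eq_of_lt i.isLt
  cases hb : i.val.testBit d
  · exact congrArg ℓ (Fin.ext (by simp [sibIndex, htop, hb, Nat.add_comm]))
  · exact congrArg ℓ (Fin.ext (by simp [sibIndex, htop, hb]))

theorem apply_sibIndex_of_val_eq_two_pow_add {n d k : ℕ} (ℓ : Fin (2 ^ (d + 1)) → Fin (2 ^ n))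
    {i : Fin (2 ^ (d + 1))} {i' : Fin (2 ^ d)} (hi : i.val = 2 ^ d + i'.val) (hk : k < d)
    (j : Fin (2 ^ k)) :
    ℓ (sibIndex i k (hk.trans (lt_add_one d)) j) = rightHalf ℓ (sibIndex i' k hk j) :=
  congrArg ℓ <| Fin.ext <| (sibIndex_val_of_val_eq_two_pow_add _ hk hi j).trans (Nat.add_comm _ _)

/-- Let `s : Fin d → Fin (2^n)` be the authentication path of the leaf
index `i`, i.e. `s k` is the Merkle root of the depth-`k` sibling subtree of `i` at level
`k`.  Then folding the leaf value `ℓ i` with the sibling hashes along the path — with the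
concatenation order at each level determined by the corresponding binary digit of `i` —
reconstructs the depth-`d` Merkle root of `ℓ`. -/
theorem recompute_eq_merkleRoot {n d : ℕ}
    (h : Fin (2 ^ n) × Fin (2 ^ n) → Fin (2 ^ n))
    (ℓ : Fin (2 ^ d) → Fin (2 ^ n)) (i : Fin (2 ^ d)) (s : Fin d → Fin (2 ^ n))
    (hs : ∀ k : Fin d, s k = merkleRoot h k.val fun j => ℓ (sibIndex i k.val k.isLt j)) :
    recompute h i.val (ℓ i) d s = merkleRoot h d ℓ := by
  induction d with
  | zero => exact congrArg ℓ (Fin.ext (Nat.lt_one_iff.mp i.isLt))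
  | succ d ih =>
    have htop := (hs (Fin.last d)).trans (congrArg (merkleRoot h d) (apply_sibIndex_last ℓ i))
    simp only [recompute, merkleRoot, htop]
    cases hb : i.val.testBit d with
    | true =>
      obtain ⟨i', hi⟩ := i.exists_val_eq_two_pow_add_of_testBit hb
      have hleaf : ℓ i = rightHalf ℓ i' := congrArg ℓ (Fin.ext (hi.trans (Nat.add_comm _ _)))
      have hsub : recompute h i.val (ℓ i) d (fun k => s k.castSucc)
          = merkleRoot h d (rightHalf ℓ) := by
        rw [recompute_congr _ _ _ fun k hk => hi ▸ Nat.testBit_two_pow_add_gt hk _, hleaf]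
        exact ih _ i' _ fun k => (hs k.castSucc).trans
          (congrArg _ (funext (apply_sibIndex_of_val_eq_two_pow_add ℓ hi k.isLt)))
      simp only [if_true, hsub]
    | false =>
      have hlt := Nat.lt_two_pow_of_testBit_eq_false i.isLt hb
      have hsub : recompute h i.val (ℓ i) d (fun k => s k.castSucc)
          = merkleRoot h d (leftHalf ℓ) :=
        ih (leftHalf ℓ) ⟨i.val, hlt⟩ _ fun k => hs k.castSucc
      simp only [Bool.false_eq_true, if_false, hsub]
end
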